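/- For every k ≥ 2, the star arboricity of the hypercube Q_{2^k - 1} equals 2^{k-1} + 1. -/

import Mathlib

/-- The `n`-dimensional hypercube graph on binary vectors of length `n`:
two vertices are adjacent iff they differ in exactly one coordinate. -/
def cubeGraph (n : ℕ) : SimpleGraph (Fin n → Bool) where
  Adj u v := (Finset.univ.filter fun i => u i ≠ v i).card = 1
  symm := by
    constructor
    intro u v h
    have : (Finset.univ.filter fun i => v i ≠ u i)
        = (Finset.univ.filter fun i => u i ≠ v i) := by
      apply Finset.filter_congr
      intro i _
      exact ⟨Ne.symm, Ne.symm⟩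
    simpa [this] using h
  loopless := by constructor; intro u h; simp at h

/-- A galaxy (star forest): no triangles and no path with three edges,
equivalently every connected component is a star. -/
def IsGalaxy {V : Type*} (F : SimpleGraph V) : Prop :=
  (∀ a b c, F.Adj a b → F.Adj b c → ¬ F.Adj c a) ∧
  (∀ a b c d, F.Adj a b → F.Adj b c → F.Adj c d → a = c ∨ b = d)

/-- The star arboricity of `G`: the least `n` such that the edges of `G`
can be partitioned into `n` galaxies. -/
noncomputable def starArboricity {V : Type*} (G : SimpleGraph V) : ℕ :=
  sInf {n | ∃ F : Fin n → SimpleGraph V,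
    (∀ i, F i ≤ G) ∧ (∀ i, IsGalaxy (F i)) ∧
    (∀ u v, G.Adj u v → ∃! i, (F i).Adj u v)}

/-!
Lower bound: every edge of a galaxy has an endpoint of degree one, so a galaxy has at most as many
edges as leaves. If `Q_n` splits into `s < n` galaxies, no vertex is a leaf of all of them, hence
`n 2^(n-1) ≤ (s - 1) 2^n`, i.e. `n + 2 ≤ 2s`; for `n = 2^k - 1` this forces `s ≥ 2^(k-1) + 1`.

Upper bound: write `n = 2m + 1` with `m < 2^(k-1)`, set the first coordinate aside and group the
other `2m` into `m` pairs, labelled by distinct nonzero vectors `ℓ p ∈ 𝔽₂^(k-1)`. The signature of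
a vertex is the sum of the labels of the pairs of its coordinates equal to `1`. The four edges of
each square spanned by a pair are oriented cyclically, and an edge is coloured by the signature of
its tail. Along an edge of pair `p` the signature changes by `ℓ p ≠ 0`, so the heads of a colour
class are not tails in it, and a head meets only one edge of the class: the label, hence the pair,
is determined by the two signatures, and in each pair a vertex is the head of one edge only. So
every class is a galaxy; the first coordinate gets its own colour.
-/

open Finset

section Galaxy

variable {V : Type*}

lemma isGalaxy_iff {F : SimpleGraph V} :
    IsGalaxy F ↔ ∀ ⦃u v⦄, F.Adj u v → (∀ w, F.Adj u w → w = v) ∨ (∀ w, F.Adj v w → w = u) := by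
  refine ⟨fun hF u v huv => ?_, fun h => ⟨fun a b c hab hbc hca => ?_, fun a b c d hab hbc hcd => ?_⟩⟩
  · by_contra! ⟨⟨a, hua, hav⟩, ⟨d, hvd, hdu⟩⟩
    rcases hF.2 a u v d hua.symm huv hvd with rfl | rfl
    exacts [hav rfl, hdu rfl]
  · rcases h hab with ha | hb
    · exact hbc.ne (ha c hca.symm).symm
    · exact hca.ne (hb c hbc)
  · rcases h hbc with hb | hc
    · exact .inl (hb a hab.symm)
    · exact .inr (hc d hcd).symm

def IsGalaxyDecomposition (G : SimpleGraph V) {s : ℕ} (F : Fin s → SimpleGraph V) : Prop :=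
  (∀ i, F i ≤ G) ∧ (∀ i, IsGalaxy (F i)) ∧ (∀ u v, G.Adj u v → ∃! i, (F i).Adj u v)

variable [Fintype V]

lemma IsGalaxy.card_edgeFinset_le {F : SimpleGraph V} [DecidableRel F.Adj] (hF : IsGalaxy F) :
    #F.edgeFinset ≤ #{v | F.degree v = 1} := by
  classical
  let edgeAt (v : V) : Sym2 V := if h : ∃ w, F.Adj v w then s(v, h.choose) else s(v, v)
  refine card_le_card_of_surjOn edgeAt fun e he => ?_
  have hpendant {u v : V} (huv : F.Adj u v) (hu : ∀ w, F.Adj u w → w = v) :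
      ∃ x ∈ ({v | F.degree v = 1} : Finset V), edgeAt x = s(u, v) := by
    have hex : ∃ w, F.Adj u w := ⟨v, huv⟩
    refine ⟨u, ?_, by simp only [edgeAt, dif_pos hex, hu _ hex.choose_spec]⟩
    simpa using SimpleGraph.degree_eq_one_iff_existsUnique_adj.2 ⟨v, huv, hu⟩
  induction e using Sym2.ind with | _ u v => ?_
  have huv : F.Adj u v := by simpa using he
  rcases isGalaxy_iff.1 hF huv with hu | hv
  · exact hpendant huv hu
  · obtain ⟨x, hx, hxe⟩ := hpendant huv.symm hv
    exact ⟨x, hx, hxe.trans Sym2.eq_swap⟩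

lemma IsGalaxyDecomposition.degree_eq_sum {G : SimpleGraph V} [DecidableRel G.Adj] {s : ℕ}
    {F : Fin s → SimpleGraph V} [∀ i, DecidableRel (F i).Adj] (hF : IsGalaxyDecomposition G F)
    (v : V) : G.degree v = ∑ i, (F i).degree v := by
  classical
  have hunion : G.neighborFinset v = univ.biUnion fun i => (F i).neighborFinset v := by
    ext w
    simp only [SimpleGraph.mem_neighborFinset, mem_biUnion, mem_univ, true_and]
    exact ⟨fun h => (hF.2.2 v w h).exists, fun ⟨i, hi⟩ => hF.1 i hi⟩
  rw [← SimpleGraph.card_neighborFinset_eq_degree, hunion, card_biUnion]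
  · simp only [SimpleGraph.card_neighborFinset_eq_degree]
  · intro i _ j _ hij
    refine disjoint_left.2 fun w hwi hwj => hij ?_
    rw [SimpleGraph.mem_neighborFinset] at hwi hwj
    exact (hF.2.2 v w (hF.1 i hwi)).unique hwi hwj

lemma IsGalaxyDecomposition.add_two_le {G : SimpleGraph V} [DecidableRel G.Adj] [Nonempty V]
    {d s : ℕ} {F : Fin s → SimpleGraph V} (hF : IsGalaxyDecomposition G F)
    (hG : G.IsRegularOfDegree d) (hsd : s < d) : d + 2 ≤ 2 * s := by
  classical
  have hleaf (v : V) : #{i | (F i).degree v = 1} ≤ s - 1 := by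
    obtain ⟨i, hi⟩ : ∃ i, (F i).degree v ≠ 1 := by
      by_contra! hall
      have := hF.degree_eq_sum v
      simp only [hall, hG v, sum_const, card_univ, Fintype.card_fin, smul_eq_mul, mul_one] at this
      omega
    calc #{i | (F i).degree v = 1} ≤ #(univ.erase i) :=
          card_le_card fun x hx => mem_erase.2 ⟨by rintro rfl; simp_all, mem_univ x⟩
      _ = s - 1 := by simp
  have hcount : d * Fintype.card V ≤ 2 * ((s - 1) * Fintype.card V) :=
    calc d * Fintype.card V = ∑ v, G.degree v := by simp [hG _, mul_comm]
      _ = ∑ i, ∑ v, (F i).degree v := by simp_rw [hF.degree_eq_sum]; exact sum_comm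
      _ = ∑ i, 2 * #(F i).edgeFinset := by simp_rw [SimpleGraph.sum_degrees_eq_twice_card_edges]
      _ ≤ ∑ i, 2 * #{v | (F i).degree v = 1} :=
          sum_le_sum fun i _ => Nat.mul_le_mul_left 2 (hF.2.1 i).card_edgeFinset_le
      _ = 2 * ∑ v, #{i | (F i).degree v = 1} := by
          simp only [← mul_sum, card_filter]; rw [sum_comm]
      _ ≤ 2 * ((s - 1) * Fintype.card V) := by
          grw [sum_le_sum fun v _ => hleaf v]; simp [mul_comm]
  rw [← mul_assoc] at hcount
  have := Nat.le_of_mul_le_mul_right hcount Fintype.card_pos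
  omega

end Galaxy

namespace Hypercube

section Cube

variable {n : ℕ}

def flipAt (v : Fin n → Bool) (j : Fin n) : Fin n → Bool := Function.update v j (!v j)

@[simp] lemma flipAt_apply_self (v : Fin n → Bool) (j : Fin n) : flipAt v j j = !v j :=
  Function.update_self _ _ _

lemma flipAt_apply_of_ne (v : Fin n → Bool) {i j : Fin n} (h : i ≠ j) : flipAt v j i = v i :=
  Function.update_of_ne h _ _

@[simp] lemma flipAt_flipAt (v : Fin n → Bool) (j : Fin n) : flipAt (flipAt v j) j = v := by
  ext i
  rcases eq_or_ne i j with rfl | h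
  · simp
  · rw [flipAt_apply_of_ne _ h, flipAt_apply_of_ne _ h]

lemma flipAt_eq_iff {u v : Fin n → Bool} {j : Fin n} :
    flipAt u j = v ↔ ∀ i, u i ≠ v i ↔ i = j := by
  refine ⟨?_, fun h => funext fun i => ?_⟩
  · rintro rfl i
    rcases eq_or_ne i j with rfl | h
    · simp
    · simp [flipAt_apply_of_ne _ h, h]
  · rcases eq_or_ne i j with rfl | hij
    · have := (h i).2 rfl
      cases hu : u i <;> cases hv : v i <;> simp_all
    · simpa [flipAt_apply_of_ne _ hij] using mt (h i).1 hij

lemma flipAt_ne_self (v : Fin n → Bool) (j : Fin n) : flipAt v j ≠ v := fun h => by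
  simpa using congrFun h j

lemma flipAt_injective (v : Fin n → Bool) : Function.Injective (flipAt v) := by
  intro j j' h
  by_contra hne
  simpa [flipAt_apply_of_ne _ hne] using congrFun h j

lemma cubeGraph_adj_iff {u v : Fin n → Bool} : (cubeGraph n).Adj u v ↔ ∃ j, flipAt u j = v := by
  simp only [cubeGraph, card_eq_one, flipAt_eq_iff, Finset.ext_iff, mem_filter, mem_univ,
    true_and, mem_singleton]

lemma cubeGraph_adj_flipAt (u : Fin n → Bool) (j : Fin n) : (cubeGraph n).Adj u (flipAt u j) :=
  cubeGraph_adj_iff.2 ⟨j, rfl⟩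

instance : DecidableRel (cubeGraph n).Adj := fun _ _ =>
  decidable_of_iff _ cubeGraph_adj_iff.symm

lemma cubeGraph_isRegularOfDegree : (cubeGraph n).IsRegularOfDegree n := by
  intro v
  have : (cubeGraph n).neighborFinset v = univ.image (flipAt v) := by
    ext w
    simp [cubeGraph_adj_iff]
  rw [← SimpleGraph.card_neighborFinset_eq_degree, this,
    card_image_of_injective _ (flipAt_injective v), card_univ, Fintype.card_fin]

variable {C : Type*}

/-- `col u j` is the colour of the edge between `u` and `flipAt u j`. -/
structure IsStarColoring (col : (Fin n → Bool) → Fin n → C) : Prop where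
  flipAt_eq : ∀ u j, col (flipAt u j) j = col u j
  pendant : ∀ u j, (∀ j', col u j' = col u j → j' = j) ∨
    (∀ j', col (flipAt u j) j' = col u j → j' = j)

namespace IsStarColoring

variable {col : (Fin n → Bool) → Fin n → C}

def colorClass (hcol : IsStarColoring col) (c : C) : SimpleGraph (Fin n → Bool) where
  Adj u v := ∃ j, flipAt u j = v ∧ col u j = c
  symm := by
    constructor
    rintro u v ⟨j, rfl, rfl⟩
    exact ⟨j, flipAt_flipAt u j, hcol.flipAt_eq u j⟩
  loopless := ⟨fun u ⟨j, h, _⟩ => flipAt_ne_self u j h⟩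

lemma isGalaxy_colorClass (hcol : IsStarColoring col) (c : C) : IsGalaxy (hcol.colorClass c) := by
  refine isGalaxy_iff.2 ?_
  rintro u _ ⟨j, rfl, rfl⟩
  refine (hcol.pendant u j).imp (fun hu w => ?_) (fun hv w => ?_)
  · rintro ⟨j', rfl, hj'⟩
    rw [hu j' hj']
  · rintro ⟨j', rfl, hj'⟩
    rw [hv j' hj', flipAt_flipAt]

lemma isGalaxyDecomposition {s : ℕ} (hcol : IsStarColoring col) (e : C ≃ Fin s) :
    IsGalaxyDecomposition (cubeGraph n) fun i => hcol.colorClass (e.symm i) := by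
  refine ⟨fun i u v ⟨j, hj, _⟩ => hj ▸ cubeGraph_adj_flipAt u j, fun i => hcol.isGalaxy_colorClass _,
    fun u v huv => ?_⟩
  obtain ⟨j, rfl⟩ := cubeGraph_adj_iff.1 huv
  refine ⟨e (col u j), ⟨j, rfl, by simp⟩, ?_⟩
  rintro i ⟨j', hj', hi⟩
  rw [← flipAt_injective u hj', hi, Equiv.apply_symm_apply]

end IsStarColoring

def consColoring (col : (Fin n → Bool) → Fin n → C) (u : Fin (n + 1) → Bool) :
    Fin (n + 1) → Option C :=
  Fin.cons none fun j => some (col (Fin.tail u) j)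

lemma tail_flipAt_succ (u : Fin (n + 1) → Bool) (j : Fin n) :
    Fin.tail (flipAt u j.succ) = flipAt (Fin.tail u) j :=
  Fin.tail_update_succ _ _ _

@[simp] lemma consColoring_zero (col : (Fin n → Bool) → Fin n → C) (u : Fin (n + 1) → Bool) :
    consColoring col u 0 = none :=
  rfl

@[simp] lemma consColoring_succ (col : (Fin n → Bool) → Fin n → C) (u : Fin (n + 1) → Bool)
    (j : Fin n) : consColoring col u j.succ = some (col (Fin.tail u) j) :=
  rfl

lemma consColoring_eq_some_iff {col : (Fin n → Bool) → Fin n → C} {u : Fin (n + 1) → Bool}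
    {j : Fin (n + 1)} {c : C} :
    consColoring col u j = some c ↔ ∃ i, j = i.succ ∧ col (Fin.tail u) i = c := by
  cases j using Fin.cases with
  | zero => simpa using fun i (h : 0 = i.succ) => absurd h.symm (Fin.succ_ne_zero i)
  | succ j => simp

lemma IsStarColoring.consColoring {col : (Fin n → Bool) → Fin n → C} (hcol : IsStarColoring col) :
    IsStarColoring (consColoring col) := by
  constructor
  · intro u j
    cases j using Fin.cases with
    | zero => rfl
    | succ j => simp [tail_flipAt_succ, hcol.flipAt_eq]
  · intro u j
    cases j using Fin.cases with
    | zero =>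
      refine .inl fun j' hj' => ?_
      cases j' using Fin.cases with
      | zero => rfl
      | succ j' => simp at hj'
    | succ j =>
      simp only [consColoring_succ, consColoring_eq_some_iff, tail_flipAt_succ]
      refine (hcol.pendant (Fin.tail u) j).imp ?_ ?_ <;>
        rintro h j' ⟨i, rfl, hi⟩ <;> rw [h i hi]

end Cube

section PairedCube

variable {m : ℕ}

def pairOf (j : Fin (2 * m)) : Fin m := ⟨j / 2, by omega⟩

def evenCoord (p : Fin m) : Fin (2 * m) := ⟨2 * p, by omega⟩

def oddCoord (p : Fin m) : Fin (2 * m) := ⟨2 * p + 1, by omega⟩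

lemma evenCoord_ne_oddCoord (p : Fin m) : evenCoord p ≠ oddCoord p := by
  simp [evenCoord, oddCoord, Fin.ext_iff]

lemma eq_evenCoord_or_eq_oddCoord (j : Fin (2 * m)) :
    j = evenCoord (pairOf j) ∨ j = oddCoord (pairOf j) := by
  simp only [evenCoord, oddCoord, pairOf, Fin.ext_iff]
  omega

/-- The edges of the square spanned by the two coordinates of a pair are oriented cyclically,
`00 → 10 → 11 → 01 → 00`, so that every vertex is the tail of exactly one of them. -/
def IsTail (u : Fin (2 * m) → Bool) (j : Fin (2 * m)) : Prop :=
  u (evenCoord (pairOf j)) = u (oddCoord (pairOf j)) ↔ j = evenCoord (pairOf j)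

instance (u : Fin (2 * m) → Bool) : DecidablePred (IsTail u) := fun _ =>
  inferInstanceAs (Decidable (_ ↔ _))

lemma isTail_flipAt_iff {u : Fin (2 * m) → Bool} {j : Fin (2 * m)} :
    IsTail (flipAt u j) j ↔ ¬ IsTail u j := by
  unfold IsTail
  obtain ⟨p, hp⟩ : ∃ p, pairOf j = p := ⟨_, rfl⟩
  have hne := evenCoord_ne_oddCoord p
  rcases eq_evenCoord_or_eq_oddCoord j with h | h <;> rw [hp] at h ⊢ <;> subst h
  · simp only [flipAt_apply_self, flipAt_apply_of_ne _ hne.symm, iff_true]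
    cases u (evenCoord p) <;> cases u (oddCoord p) <;> decide
  · simp [flipAt_apply_of_ne _ hne, hne.symm]

lemma eq_of_isTail_flipAt {w : Fin (2 * m) → Bool} {j₁ j₂ : Fin (2 * m)}
    (hp : pairOf j₁ = pairOf j₂) (h₁ : IsTail (flipAt w j₁) j₁) (h₂ : IsTail (flipAt w j₂) j₂) :
    j₁ = j₂ := by
  rw [isTail_flipAt_iff, IsTail, hp] at h₁
  rw [isTail_flipAt_iff, IsTail] at h₂
  have hparity : j₁ = evenCoord (pairOf j₂) ↔ j₂ = evenCoord (pairOf j₂) := by tauto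
  have hne := evenCoord_ne_oddCoord (pairOf j₂)
  rcases eq_evenCoord_or_eq_oddCoord j₁ with h | h <;> rw [hp] at h <;>
    rcases eq_evenCoord_or_eq_oddCoord j₂ with h' | h' <;> grind

def edgeTail (u : Fin (2 * m) → Bool) (j : Fin (2 * m)) : Fin (2 * m) → Bool :=
  if IsTail u j then u else flipAt u j

lemma edgeTail_flipAt (u : Fin (2 * m) → Bool) (j : Fin (2 * m)) :
    edgeTail (flipAt u j) j = edgeTail u j := by
  by_cases h : IsTail u j <;> simp [edgeTail, isTail_flipAt_iff, h]

variable {α : Type*} [AddCommGroup α] [Module (ZMod 2) α] (ℓ : Fin m → α)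

def signature (u : Fin (2 * m) → Bool) : α := ∑ j, if u j then ℓ (pairOf j) else 0

lemma signature_flipAt (u : Fin (2 * m) → Bool) (j : Fin (2 * m)) :
    signature ℓ (flipAt u j) = signature ℓ u + ℓ (pairOf j) := by
  rw [← sub_eq_iff_eq_add', signature, signature, ← Finset.sum_sub_distrib,
    Finset.sum_eq_single j]
  · cases h : u j <;> simp [h, ZModModule.neg_eq_self]
  · intro i _ hi
    simp [flipAt_apply_of_ne _ hi]
  · simp

def tailColoring (u : Fin (2 * m) → Bool) (j : Fin (2 * m)) : α := signature ℓ (edgeTail u j)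

variable {ℓ}

lemma eq_of_tailColoring_eq_of_not_isTail (hℓ : Function.Injective ℓ) (hℓ0 : ∀ p, ℓ p ≠ 0)
    {h : Fin (2 * m) → Bool} {j j' : Fin (2 * m)} (hj : ¬ IsTail h j)
    (hcol : tailColoring ℓ h j' = tailColoring ℓ h j) : j' = j := by
  simp only [tailColoring, edgeTail, if_neg hj, signature_flipAt] at hcol
  by_cases hj' : IsTail h j'
  · rw [if_pos hj', left_eq_add] at hcol
    exact absurd hcol (hℓ0 _)
  · rw [if_neg hj', signature_flipAt, add_right_inj] at hcol
    exact eq_of_isTail_flipAt (hℓ hcol) (isTail_flipAt_iff.2 hj') (isTail_flipAt_iff.2 hj)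

lemma isStarColoring_tailColoring (hℓ : Function.Injective ℓ) (hℓ0 : ∀ p, ℓ p ≠ 0) :
    IsStarColoring (tailColoring ℓ) := by
  have hsymm (u j) : tailColoring ℓ (flipAt u j) j = tailColoring ℓ u j := by
    simp only [tailColoring, edgeTail_flipAt]
  refine ⟨hsymm, fun u j => ?_⟩
  by_cases hj : IsTail u j
  · exact .inr fun j' hj' => eq_of_tailColoring_eq_of_not_isTail hℓ hℓ0
      (fun h => isTail_flipAt_iff.1 h hj) (hj'.trans (hsymm u j).symm)
  · exact .inl fun j' hj' => eq_of_tailColoring_eq_of_not_isTail hℓ hℓ0 hj hj'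

end PairedCube

lemma exists_isGalaxyDecomposition_cubeGraph {m w : ℕ} (hm : m < 2 ^ w) :
    ∃ F : Fin (2 ^ w + 1) → SimpleGraph (Fin (2 * m + 1) → Bool),
      IsGalaxyDecomposition (cubeGraph (2 * m + 1)) F := by
  obtain ⟨ℓ, hℓ, hℓ0⟩ : ∃ ℓ : Fin m → Fin w → ZMod 2, Function.Injective ℓ ∧ ∀ p, ℓ p ≠ 0 := by
    have : Fintype.card (Fin m) ≤ Fintype.card {x : Fin w → ZMod 2 // x ≠ 0} := by
      simp only [Fintype.card_fin, Fintype.card_subtype_compl, Fintype.card_pi, ZMod.card,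
        prod_const, card_univ, Fintype.card_unique]
      omega
    obtain ⟨e⟩ := Function.Embedding.nonempty_of_card_le this
    exact ⟨fun p => e p, fun p q h => e.injective (Subtype.ext h), fun p => (e p).2⟩
  have hcard : Fintype.card (Option (Fin w → ZMod 2)) = 2 ^ w + 1 := by simp
  exact ⟨_, (isStarColoring_tailColoring hℓ hℓ0).consColoring.isGalaxyDecomposition
    (Fintype.equivFinOfCardEq hcard)⟩

end Hypercube

/-- $sa(Q_{2^k-1}) = 2^{k-1}+1$ for $k \ge 2$. -/
theorem starArboricity_cube_pow_sub_one (k : ℕ) (hk : 2 ≤ k) :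
    starArboricity (cubeGraph (2 ^ k - 1)) = 2 ^ (k - 1) + 1 := by
  have hpow : 2 ^ k = 2 * 2 ^ (k - 1) := by rw [← pow_succ']; congr 1; omega
  have hk' : 2 ≤ 2 ^ (k - 1) := Nat.le_self_pow (by omega) 2
  obtain ⟨m, hm, hn⟩ : ∃ m, m < 2 ^ (k - 1) ∧ 2 ^ k - 1 = 2 * m + 1 :=
    ⟨2 ^ (k - 1) - 1, by omega, by omega⟩
  rw [hn]
  obtain ⟨F, hF⟩ := Hypercube.exists_isGalaxyDecomposition_cubeGraph hm
  have hupper : starArboricity (cubeGraph (2 * m + 1)) ≤ 2 ^ (k - 1) + 1 := Nat.sInf_le ⟨F, hF⟩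
  obtain ⟨F', hF'⟩ : starArboricity (cubeGraph (2 * m + 1)) ∈ _ := Nat.sInf_mem ⟨_, F, hF⟩
  have hlower := IsGalaxyDecomposition.add_two_le hF' Hypercube.cubeGraph_isRegularOfDegree
  omega
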